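/- arXiv:2101.07428 — 3 statements merged into one kernel-verified Lean document; each statement's English description precedes it below -/
import Mathlib

section
/- There is a universal constant C > 0 such that for every ν ∈ (0,1) and every integer n ≥ 2, the path graph P_n admits an oblivious ν-reliable 2-hop left spanner with at most C·n·ν^{−1}·log₂ n edges. -/
/-!
The hubs are `0` and, on each dyadic block `[2 ^ i, 2 ^ (i + 1))`, `r = ⌈2 / ν⌉` independent
uniform points; every hub is joined to all vertices to its right, which gives
`O(ν⁻¹ n log n)` edges. A vertex `a` fails when every hub `≤ a` lies in `B`; otherwise any
`b > a` is reached from `a` through an unblocked hub.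

Failures need `0 ∈ B`. With `m = |B|` and `T_a` the unblocked points `≤ a`, a hub of level `i`
misses `T_a` with probability `1 - |T_a ∩ block_i| / 2 ^ i ≤ ∏_{x ∈ T_a ∩ block_i} (1 - 1/x)`,
since each such `x` is at least `2 ^ i`. Hence `a` fails with probability at most
`(∏_{x ∈ T_a} (1 - 1/x)) ^ r ≤ (m / (m + |T_a|)) ^ r`, the last step because the `k`-th
smallest element of `T_a` is less than `m + k`. The sizes `|T_a|` are distinct positive
integers, so the expected number of failures is at most
`∑_{j ≥ 1} (m / (m + j)) ^ r ≤ m / (r - 1) ≤ ν m` by telescoping.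
-/

open Finset

theorem Finset.one_sub_sum_le_prod_one_sub {ι R : Type*} [CommRing R] [LinearOrder R]
    [IsStrictOrderedRing R] (s : Finset ι) {f : ι → R} (h0 : ∀ i ∈ s, 0 ≤ f i)
    (h1 : ∀ i ∈ s, f i ≤ 1) : 1 - ∑ i ∈ s, f i ≤ ∏ i ∈ s, (1 - f i) := by
  classical
  induction s using Finset.induction_on with
  | empty => simp
  | insert a s ha ih =>
    rw [sum_insert ha, prod_insert ha]
    have hs : 0 ≤ ∑ i ∈ s, f i := sum_nonneg fun i hi => h0 i (mem_insert_of_mem hi)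
    have hfa := h0 a (mem_insert_self a s)
    have hfa1 := h1 a (mem_insert_self a s)
    have ih := ih (fun i hi => h0 i (mem_insert_of_mem hi))
      (fun i hi => h1 i (mem_insert_of_mem hi))
    nlinarith

theorem SimpleGraph.IsVertexCover.ncard_edgeSet_le {V : Type*} [Finite V] {G : SimpleGraph V}
    {C : Set V} (hC : G.IsVertexCover C) : G.edgeSet.ncard ≤ C.ncard * Nat.card V := by
  have hsub : G.edgeSet ⊆ (fun p : V × V => s(p.1, p.2)) '' (C ×ˢ Set.univ) := by
    intro e he
    induction e using Sym2.ind with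
    | h a b =>
      rcases hC he with ha | hb
      · exact ⟨(a, b), ⟨ha, trivial⟩, rfl⟩
      · exact ⟨(b, a), ⟨hb, trivial⟩, Sym2.eq_swap⟩
  calc G.edgeSet.ncard ≤ ((fun p : V × V => s(p.1, p.2)) '' (C ×ˢ Set.univ)).ncard :=
        Set.ncard_le_ncard hsub
    _ ≤ (C ×ˢ (Set.univ : Set V)).ncard := Set.ncard_image_le
    _ = C.ncard * Nat.card V := by rw [Set.ncard_prod, Set.ncard_univ]

namespace PathSpanner

lemma mul_div_add_one_pow_succ_le (s : ℕ) {m y : ℝ} (hm : 0 ≤ m) (hy : 0 < y) :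
    s * (m / (y + 1)) ^ (s + 1) ≤ m * ((m / y) ^ s - (m / (y + 1)) ^ s) := by
  set q := m / (y + 1)
  have hbernoulli : 1 + s * y⁻¹ ≤ (1 + y⁻¹) ^ s :=
    one_add_mul_le_pow (by linarith [inv_nonneg.2 hy.le]) s
  have hmy : m / y = q * (1 + y⁻¹) := by simp only [q]; field_simp
  calc (s : ℝ) * q ^ (s + 1) = m * (q ^ s * (s * (y + 1)⁻¹)) := by
        simp only [q]; ring
    _ ≤ m * (q ^ s * (s * y⁻¹)) := by gcongr; linarith
    _ ≤ m * (q ^ s * ((1 + y⁻¹) ^ s - 1)) := by gcongr; linarith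
    _ = m * ((m / y) ^ s - q ^ s) := by rw [hmy, mul_pow]; ring

lemma mul_sum_range_div_add_pow_le {m : ℝ} (hm : 0 < m) (s J : ℕ) :
    s * ∑ j ∈ range J, (m / (m + (j + 1 : ℕ))) ^ (s + 1) ≤ m := by
  calc (s : ℝ) * ∑ j ∈ range J, (m / (m + (j + 1 : ℕ))) ^ (s + 1)
      ≤ ∑ j ∈ range J, m * ((m / (m + j)) ^ s - (m / (m + (j + 1 : ℕ))) ^ s) := by
        rw [mul_sum]
        refine sum_le_sum fun j _ => ?_
        push_cast
        rw [← add_assoc]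
        exact mul_div_add_one_pow_succ_le s hm.le (by positivity)
    _ = m * (1 - (m / (m + J)) ^ s) := by
        rw [← mul_sum, sum_range_sub' (fun j : ℕ => (m / (m + j)) ^ s)]
        simp [hm.ne']
    _ ≤ m := by
        have : 0 ≤ (m / (m + J)) ^ s := by positivity
        nlinarith

lemma sum_div_add_pow_le {m : ℝ} (hm : 0 < m) {r : ℕ} (hr : 2 ≤ r) {s : Finset ℕ}
    (hs : 0 ∉ s) : ∑ j ∈ s, (m / (m + j)) ^ r ≤ m / (r - 1) := by
  have hr1 : (0 : ℝ) < r - 1 := by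
    have : (2 : ℝ) ≤ r := by exact_mod_cast hr
    linarith
  have hsub : s ⊆ (range (s.sup id)).image (· + 1) := by
    intro j hj
    have hj0 : j ≠ 0 := fun h => hs (h ▸ hj)
    have hjs : j ≤ s.sup id := le_sup (f := id) hj
    exact mem_image.2 ⟨j - 1, mem_range.2 (by omega), by omega⟩
  have htel := mul_sum_range_div_add_pow_le hm (r - 1) (s.sup id)
  rw [Nat.sub_add_cancel (by omega), Nat.cast_sub (by omega), Nat.cast_one,
    ← sum_image (f := fun j : ℕ => (m / (m + j)) ^ r) (g := (· + 1))
      (add_left_injective 1).injOn] at htel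
  rw [le_div_iff₀ hr1, mul_comm]
  refine le_trans ?_ htel
  gcongr

lemma one_sub_inv_natCast_nonneg (x : ℕ) : 0 ≤ 1 - (x : ℝ)⁻¹ := by
  rcases x.eq_zero_or_pos with rfl | hx
  · simp
  · exact sub_nonneg.2 (inv_le_one_of_one_le₀ (by exact_mod_cast hx))

lemma prod_one_sub_inv_le {m : ℕ} (hm : 0 < m) (T : Finset ℕ)
    (hT : ∀ x ∈ T, 0 < x ∧ x ≤ m + #{y ∈ T | y < x}) :
    ∏ x ∈ T, (1 - (x : ℝ)⁻¹) ≤ m / (m + #T) := by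
  induction T using Finset.induction_on_max with
  | empty => simp [hm.ne']
  | insert a s hlt ih =>
    have ha : a ∉ s := fun h => lt_irrefl a (hlt a h)
    have hfilter : ∀ x ∈ s, {y ∈ insert a s | y < x} = {y ∈ s | y < x} := fun x hx => by
      rw [filter_insert, if_neg (not_lt.2 (hlt x hx).le)]
    have ih := ih fun x hx => by
      simpa [hfilter x hx] using hT x (mem_insert_of_mem hx)
    obtain ⟨ha0, has⟩ := hT a (mem_insert_self a s)
    have hfa : {y ∈ insert a s | y < a} = s := by
      rw [filter_insert, if_neg (lt_irrefl a), filter_true_of_mem hlt]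
    rw [hfa] at has
    have hfac : 1 - (a : ℝ)⁻¹ ≤ 1 - ((m + #s + 1 : ℕ) : ℝ)⁻¹ :=
      sub_le_sub_left (inv_anti₀ (by exact_mod_cast ha0) (by exact_mod_cast (by omega))) 1
    rw [prod_insert ha, card_insert_of_notMem ha, mul_comm]
    calc (∏ x ∈ s, (1 - (x : ℝ)⁻¹)) * (1 - (a : ℝ)⁻¹)
        ≤ m / (m + #s) * (1 - ((m + #s + 1 : ℕ) : ℝ)⁻¹) :=
          mul_le_mul ih hfac (one_sub_inv_natCast_nonneg a) (by positivity)
      _ = m / (m + (#s + 1 : ℕ)) := by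
          push_cast
          field_simp
          ring

lemma card_sdiff_le_mul_prod {D : Finset ℕ} (hD : ∀ x ∈ D, #D ≤ x) (T : Finset ℕ) :
    (#(D \ T) : ℝ) ≤ #D * ∏ x ∈ D ∩ T, (1 - (x : ℝ)⁻¹) := by
  have hbound : ∀ x ∈ D ∩ T, 0 < x ∧ #D ≤ x := fun x hx => by
    have hxD := (mem_inter.1 hx).1
    exact ⟨(card_pos.2 ⟨x, hxD⟩).trans_le (hD x hxD), hD x hxD⟩
  have hsum : (#D : ℝ) * ∑ x ∈ D ∩ T, (x : ℝ)⁻¹ ≤ #(D ∩ T) := by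
    rw [mul_sum]
    refine (sum_le_card_nsmul _ _ 1 fun x hx => ?_).trans_eq (by simp)
    rw [mul_inv_le_iff₀ (by exact_mod_cast (hbound x hx).1), one_mul]
    exact_mod_cast (hbound x hx).2
  have hcard : (#(D \ T) : ℝ) = #D - #(D ∩ T) := by
    rw [← card_sdiff_add_card_inter D T]
    push_cast
    ring
  have hweier := one_sub_sum_le_prod_one_sub (D ∩ T) (f := fun x : ℕ => (x : ℝ)⁻¹)
    (fun x _ => by positivity) fun x hx =>
      inv_le_one_of_one_le₀ (by exact_mod_cast (hbound x hx).1)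
  calc (#(D \ T) : ℝ) ≤ #D * (1 - ∑ x ∈ D ∩ T, (x : ℝ)⁻¹) := by rw [hcard]; linarith
    _ ≤ #D * ∏ x ∈ D ∩ T, (1 - (x : ℝ)⁻¹) := by gcongr

lemma card_filter_forall_notMem_le {ι : Type*} [Fintype ι] [DecidableEq ι]
    {D : ι → Finset ℕ} (hD : ∀ k, ∀ x ∈ D k, #(D k) ≤ x) (T : Finset ℕ) :
    (#{g : (k : ι) → D k | ∀ k, (g k : ℕ) ∉ T} : ℝ) ≤
      Fintype.card ((k : ι) → D k) * ∏ k, ∏ x ∈ D k ∩ T, (1 - (x : ℝ)⁻¹) := by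
  have hpi : ({g : (k : ι) → D k | ∀ k, (g k : ℕ) ∉ T} : Finset _) =
      Fintype.piFinset fun k => univ.filter fun u : D k => (u : ℕ) ∉ T := by
    ext g
    simp
  have hfiber : ∀ k, #(univ.filter fun u : D k => (u : ℕ) ∉ T) = #(D k \ T) := fun k => by
    rw [univ_eq_attach, filter_attach (· ∉ T), card_map, card_attach, sdiff_eq_filter]
  rw [hpi, Fintype.card_piFinset, Fintype.card_pi, Nat.cast_prod, Nat.cast_prod,
    ← prod_mul_distrib]
  gcongr with k
  rw [hfiber, Fintype.card_coe]
  exact card_sdiff_le_mul_prod (hD k) T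

def dyadicBlock (i : ℕ) : Finset ℕ := Ico (2 ^ i) (2 ^ (i + 1))

lemma card_dyadicBlock (i : ℕ) : #(dyadicBlock i) = 2 ^ i := by
  rw [dyadicBlock, Nat.card_Ico, pow_succ]
  omega

lemma card_dyadicBlock_le {i x : ℕ} (hx : x ∈ dyadicBlock i) : #(dyadicBlock i) ≤ x := by
  rw [card_dyadicBlock]
  exact (mem_Ico.1 hx).1

instance (i : ℕ) : Nonempty (dyadicBlock i) :=
  ⟨⟨2 ^ i, mem_Ico.2 ⟨le_rfl, Nat.pow_lt_pow_succ one_lt_two⟩⟩⟩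

lemma prod_range_prod_dyadicBlock {M : Type*} [CommMonoid M] (f : ℕ → M) (L : ℕ) :
    ∏ i ∈ range L, ∏ x ∈ dyadicBlock i, f x = ∏ x ∈ Ico 1 (2 ^ L), f x := by
  induction L with
  | zero => simp
  | succ L ih =>
    rw [prod_range_succ, ih, dyadicBlock,
      prod_Ico_consecutive _ Nat.one_le_two_pow (Nat.pow_le_pow_right two_pos L.le_succ)]

lemma prod_range_prod_dyadicBlock_inter {M : Type*} [CommMonoid M] (f : ℕ → M) {L : ℕ}
    {T : Finset ℕ} (hT : T ⊆ Ico 1 (2 ^ L)) :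
    ∏ i ∈ range L, ∏ x ∈ dyadicBlock i ∩ T, f x = ∏ x ∈ T, f x := by
  simp_rw [← prod_ite_mem]
  rw [prod_range_prod_dyadicBlock, prod_ite_mem, inter_eq_right.2 hT]

/-- Under the uniform distribution, a sample places `r` independent uniform hubs in each dyadic
block `[2 ^ i, 2 ^ (i + 1))`, `i < L`. -/
abbrev Sample (L r : ℕ) := (k : Fin L × Fin r) → dyadicBlock k.1

def hubs {L r : ℕ} (g : Sample L r) : Finset ℕ := insert 0 (univ.image fun k => (g k : ℕ))

lemma card_hubs_le {L r : ℕ} (g : Sample L r) : #(hubs g) ≤ L * r + 1 := by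
  refine (card_insert_le _ _).trans (Nat.add_le_add_right ?_ 1)
  simpa using card_image_le (s := (univ : Finset (Fin L × Fin r)))

lemma card_filter_sample_forall_notMem_le {L r : ℕ} {T : Finset ℕ} (hT : T ⊆ Ico 1 (2 ^ L)) :
    (#{g : Sample L r | ∀ k, (g k : ℕ) ∉ T} : ℝ) ≤
      Fintype.card (Sample L r) * (∏ x ∈ T, (1 - (x : ℝ)⁻¹)) ^ r := by
  refine (card_filter_forall_notMem_le (fun k _ => card_dyadicBlock_le) T).trans_eq ?_
  rw [Fintype.prod_prod_type, ← prod_range_prod_dyadicBlock_inter _ hT, ← prod_pow,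
    ← Fin.prod_univ_eq_prod_range fun i => (∏ x ∈ dyadicBlock i ∩ T, (1 - (x : ℝ)⁻¹)) ^ r]
  simp

/-- The vertices that join `B⁺`. -/
def Uncovered (S B : Finset ℕ) (a : ℕ) : Prop := ∀ x ∈ S, x ≤ a → x ∈ B

instance (S B : Finset ℕ) (a : ℕ) : Decidable (Uncovered S B a) := by
  unfold Uncovered; infer_instance

lemma Uncovered.zero_mem {L r : ℕ} {g : Sample L r} {B : Finset ℕ} {a : ℕ}
    (h : Uncovered (hubs g) B a) : 0 ∈ B :=
  h 0 (mem_insert_self _ _) (Nat.zero_le a)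

lemma le_card_add_card_filter_lt (B : Finset ℕ) {a x : ℕ} (hx : x ≤ a) :
    x ≤ #B + #{y ∈ range (a + 1) \ B | y < x} := by
  have hsub : range x ⊆ B ∪ {y ∈ range (a + 1) \ B | y < x} := fun y hy => by
    simp only [mem_range] at hy
    by_cases hyB : y ∈ B
    · exact mem_union_left _ hyB
    · exact mem_union_right _ (by simp [hyB, hy]; omega)
  simpa using (card_le_card hsub).trans (card_union_le _ _)

lemma card_uncovered_le {L r : ℕ} {B : Finset ℕ} (hB : 0 ∈ B) {a : ℕ} (ha : a < 2 ^ L) :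
    (#{g : Sample L r | Uncovered (hubs g) B a} : ℝ) ≤
      Fintype.card (Sample L r) * (#B / (#B + #(range (a + 1) \ B))) ^ r := by
  set T := range (a + 1) \ B
  have hsub : ({g : Sample L r | Uncovered (hubs g) B a} : Finset _) ⊆
      ({g : Sample L r | ∀ k, (g k : ℕ) ∉ T} : Finset _) := by
    intro g hg
    refine mem_filter.2 ⟨mem_univ g, fun k hk => ?_⟩
    simp only [T, mem_sdiff, mem_range] at hk
    exact hk.2 ((mem_filter.1 hg).2 _ (mem_insert_of_mem (mem_image_of_mem _ (mem_univ k)))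
      (by omega))
  have hT : T ⊆ Ico 1 (2 ^ L) := fun x hx => by
    simp only [T, mem_sdiff, mem_range] at hx
    have : x ≠ 0 := fun h => hx.2 (h ▸ hB)
    exact mem_Ico.2 ⟨by omega, by omega⟩
  have hrank : ∀ x ∈ T, 0 < x ∧ x ≤ #B + #{y ∈ T | y < x} := fun x hx => by
    have := hT hx
    exact ⟨(mem_Ico.1 this).1, le_card_add_card_filter_lt B (by simp [T] at hx; omega)⟩
  calc (#{g : Sample L r | Uncovered (hubs g) B a} : ℝ)
      ≤ #{g : Sample L r | ∀ k, (g k : ℕ) ∉ T} := by exact_mod_cast card_le_card hsub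
    _ ≤ Fintype.card (Sample L r) * (∏ x ∈ T, (1 - (x : ℝ)⁻¹)) ^ r :=
        card_filter_sample_forall_notMem_le hT
    _ ≤ Fintype.card (Sample L r) * (#B / (#B + #T)) ^ r := by
        gcongr
        · exact prod_nonneg fun x _ => one_sub_inv_natCast_nonneg x
        · exact prod_one_sub_inv_le (card_pos.2 ⟨0, hB⟩) T hrank

lemma sum_card_uncovered_le {L r : ℕ} (hr : 2 ≤ r) {B A : Finset ℕ}
    (hA : ∀ a ∈ A, a ∉ B ∧ a < 2 ^ L) :
    ∑ a ∈ A, (#{g : Sample L r | Uncovered (hubs g) B a} : ℝ) ≤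
      Fintype.card (Sample L r) * (#B / (r - 1)) := by
  by_cases hB : 0 ∈ B
  swap
  · have : ∀ a, ({g : Sample L r | Uncovered (hubs g) B a} : Finset _) = ∅ := fun a =>
      filter_false_of_mem fun g _ h => hB h.zero_mem
    simp only [this, card_empty, Nat.cast_zero, sum_const_zero]
    have : (0 : ℝ) ≤ r - 1 := by
      have : (2 : ℝ) ≤ r := by exact_mod_cast hr
      linarith
    positivity
  set c : ℕ → ℕ := fun a => #(range (a + 1) \ B)
  have hmono : ∀ a b, b ∉ B → a < b → c a < c b := fun a b hb hab =>
    card_lt_card <| (ssubset_iff_of_subset (sdiff_subset_sdiff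
      (range_subset_range.2 (by omega)) le_rfl)).2 ⟨b, by simp [hb], by simp; omega⟩
  have hinj : Set.InjOn c A := fun a ha b hb h => by
    rcases lt_trichotomy a b with hab | rfl | hab
    · exact absurd h (hmono a b (hA b hb).1 hab).ne
    · rfl
    · exact absurd h (hmono b a (hA a ha).1 hab).ne'
  have hpos : 0 ∉ A.image c := fun h => by
    obtain ⟨a, ha, hca⟩ := mem_image.1 h
    exact (card_ne_zero_of_mem (s := range (a + 1) \ B)
      (by simp [(hA a ha).1] : a ∈ range (a + 1) \ B)) hca
  calc ∑ a ∈ A, (#{g : Sample L r | Uncovered (hubs g) B a} : ℝ)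
      ≤ ∑ a ∈ A, Fintype.card (Sample L r) * ((#B : ℝ) / (#B + c a)) ^ r :=
        sum_le_sum fun a ha => card_uncovered_le hB (hA a ha).2
    _ = Fintype.card (Sample L r) * ∑ j ∈ A.image c, ((#B : ℝ) / (#B + j)) ^ r := by
        rw [mul_sum, sum_image hinj]
    _ ≤ Fintype.card (Sample L r) * (#B / (r - 1)) := by
        gcongr
        exact sum_div_add_pow_le (by exact_mod_cast card_pos.2 ⟨0, hB⟩) hr hpos

open Classical in
noncomputable def natFinset {n : ℕ} (B : Set (Fin n)) : Finset ℕ := B.toFinset.map Fin.valEmbedding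

lemma val_mem_natFinset {n : ℕ} {B : Set (Fin n)} {a : Fin n} :
    (a : ℕ) ∈ natFinset B ↔ a ∈ B := by
  simp [natFinset, Fin.val_inj]

lemma card_natFinset {n : ℕ} (B : Set (Fin n)) : #(natFinset B) = B.ncard := by
  classical
  rw [natFinset, card_map, Set.ncard_eq_toFinset_card']

def hubGraph (n : ℕ) (S : Finset ℕ) : SimpleGraph (Fin n) :=
  SimpleGraph.fromRel fun c b => c < b ∧ (c : ℕ) ∈ S

lemma hubGraph_adj {n : ℕ} {S : Finset ℕ} {c b : Fin n} (hcb : c < b) (hc : (c : ℕ) ∈ S) :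
    (hubGraph n S).Adj c b := by
  simp [hubGraph, hcb.ne, hcb, hc]

lemma isVertexCover_hubGraph (n : ℕ) (S : Finset ℕ) :
    (hubGraph n S).IsVertexCover {c | (c : ℕ) ∈ S} := by
  rintro c b ⟨-, ⟨-, h⟩ | ⟨-, h⟩⟩
  · exact Or.inl h
  · exact Or.inr h

lemma ncard_edgeSet_hubGraph_le (n : ℕ) (S : Finset ℕ) :
    (hubGraph n S).edgeSet.ncard ≤ #S * n := by
  have hC : {c : Fin n | (c : ℕ) ∈ S}.ncard ≤ #S := by
    rw [← Set.ncard_coe_finset]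
    exact Set.ncard_le_ncard_of_injOn Fin.val (fun c hc => hc) Fin.val_injective.injOn
  simpa using (isVertexCover_hubGraph n S).ncard_edgeSet_le.trans (Nat.mul_le_mul_right _ hC)

lemma exists_two_hop_of_not_uncovered {n : ℕ} {S : Finset ℕ} {B : Set (Fin n)} {a b : Fin n}
    (hab : a < b) (h : ¬ Uncovered S (natFinset B) a) :
    ∃ c : Fin n, c ∉ B ∧ c ≤ a ∧ (c = a ∨ (hubGraph n S).Adj c a) ∧ (hubGraph n S).Adj c b := by
  simp only [Uncovered, not_forall] at h
  obtain ⟨x, hxS, hxa, hxB⟩ := h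
  let c : Fin n := ⟨x, hxa.trans_lt a.2⟩
  have hca : c ≤ a := hxa
  refine ⟨c, fun hc => hxB (val_mem_natFinset.2 hc), hca, ?_, hubGraph_adj (hca.trans_lt hab) hxS⟩
  rcases hca.eq_or_lt with h | h
  · exact Or.inl h
  · exact Or.inr (hubGraph_adj h hxS)

lemma sum_ncard_union_uncovered_le {n L r : ℕ} (hn : n ≤ 2 ^ L) (hr : 2 ≤ r) (B : Set (Fin n)) :
    ∑ g : Sample L r, ((B ∪ {a | Uncovered (hubs g) (natFinset B) a}).ncard : ℝ) ≤
      Fintype.card (Sample L r) * ((1 + 1 / (r - 1)) * B.ncard) := by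
  classical
  set U := fun (g : Sample L r) (a : Fin n) => Uncovered (hubs g) (natFinset B) a
  set A := (univ.filter fun a : Fin n => a ∉ B)
  have hunion : ∀ g, ((B ∪ {a | U g a}).ncard : ℝ) ≤ B.ncard + #(A.filter (U g)) := fun g => by
    have hdiff : {a | U g a} \ B = ↑(A.filter (U g)) := by
      ext a
      simp [A, and_comm]
    have := Set.ncard_union_le B ({a | U g a} \ B)
    rw [Set.union_sdiff_self, hdiff, Set.ncard_coe_finset] at this
    exact_mod_cast this
  have hswap : ∑ g : Sample L r, #(A.filter (U g)) =
      ∑ x ∈ A.map Fin.valEmbedding, #{g : Sample L r | Uncovered (hubs g) (natFinset B) x} := by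
    rw [sum_map]
    exact sum_card_bipartiteAbove_eq_sum_card_bipartiteBelow U
  have hA : ∀ x ∈ A.map Fin.valEmbedding, x ∉ natFinset B ∧ x < 2 ^ L := by
    simp only [mem_map, mem_filter, A]
    rintro _ ⟨a, ⟨-, haB⟩, rfl⟩
    exact ⟨fun h => haB (val_mem_natFinset.1 h), a.2.trans_le hn⟩
  have hfail := sum_card_uncovered_le hr hA
  rw [card_natFinset, ← Nat.cast_sum, ← hswap, Nat.cast_sum] at hfail
  calc ∑ g : Sample L r, ((B ∪ {a | U g a}).ncard : ℝ)
      ≤ ∑ g : Sample L r, ((B.ncard : ℝ) + #(A.filter (U g))) := sum_le_sum fun g _ => hunion g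
    _ ≤ Fintype.card (Sample L r) * B.ncard + Fintype.card (Sample L r) * (B.ncard / (r - 1)) := by
        rw [sum_add_distrib, sum_const, card_univ, nsmul_eq_mul]
        gcongr
    _ = Fintype.card (Sample L r) * ((1 + 1 / (r - 1)) * B.ncard) := by ring

lemma two_le_ceil_two_div {ν : ℝ} (hν : 0 < ν) (hν1 : ν < 1) : 2 ≤ ⌈2 / ν⌉₊ := by
  have : (2 : ℝ) ≤ 2 / ν := by rw [le_div_iff₀ hν]; linarith
  exact_mod_cast this.trans (Nat.le_ceil _)

lemma one_div_ceil_two_div_sub_one_le {ν : ℝ} (hν : 0 < ν) (hν1 : ν < 1) :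
    1 / ((⌈2 / ν⌉₊ : ℝ) - 1) ≤ ν := by
  have hr : 2 / ν ≤ ⌈2 / ν⌉₊ := Nat.le_ceil _
  have h2 : ν * (2 / ν) = 2 := by field_simp
  rw [div_le_iff₀ (by nlinarith)]
  nlinarith

lemma log_add_one_mul_ceil_add_one_mul_le {ν : ℝ} (hν : 0 < ν) (hν1 : ν < 1) {n : ℕ}
    (hn : 2 ≤ n) :
    ((((Nat.log 2 n + 1) * ⌈2 / ν⌉₊ + 1) * n : ℕ) : ℝ) ≤ 7 * n * ν⁻¹ * Real.logb 2 n := by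
  have hlog : 1 ≤ Real.logb 2 n := by
    rw [Real.le_logb_iff_rpow_le one_lt_two (by positivity), Real.rpow_one]
    exact_mod_cast hn
  have hL : (Nat.log 2 n : ℝ) + 1 ≤ 2 * Real.logb 2 n := by
    have := Real.natLog_le_logb n 2
    push_cast at this
    linarith
  have hinv : 1 ≤ ν⁻¹ := one_le_inv_iff₀.2 ⟨hν, hν1.le⟩
  have hr : (⌈2 / ν⌉₊ : ℝ) ≤ 3 * ν⁻¹ := by
    have := Nat.ceil_lt_add_one (by positivity : 0 ≤ 2 / ν)
    have h2 : 2 / ν = 2 * ν⁻¹ := div_eq_mul_inv 2 ν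
    linarith
  have hlogν : (1 : ℝ) ≤ ν⁻¹ * Real.logb 2 n := by nlinarith
  have hsize : ((Nat.log 2 n : ℝ) + 1) * ⌈2 / ν⌉₊ + 1 ≤ 7 * ν⁻¹ * Real.logb 2 n := by
    nlinarith [mul_le_mul hL hr (by positivity) (by positivity)]
  push_cast
  nlinarith [(Nat.cast_nonneg n : (0 : ℝ) ≤ n)]

end PathSpanner

open PathSpanner

/-- The path graph `P_n` (vertices `Fin n`) admits an oblivious `ν`-reliable
2-hop left spanner with at most `C·n·ν⁻¹·log₂ n` edges: a distribution over
graphs `H ω` on `Fin n`, each with at most that many edges, such that for every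
attack `B` there are faulty extensions `Bp ω ⊇ B` with `E[|Bp|] ≤ (1+ν)|B|`,
and for every `a < b` outside `Bp ω` there exists `c ∉ B` with `c ≤ a`,
`(c = a or {c,a} ∈ H ω)` and `{c,b} ∈ H ω`. -/
theorem path_graph_two_hop_left_spanner :
    ∃ C : ℝ, 0 < C ∧
      ∀ (ν : ℝ), 0 < ν → ν < 1 → ∀ n : ℕ, 2 ≤ n →
        ∃ (N : ℕ) (p : Fin N → ℝ) (H : Fin N → SimpleGraph (Fin n)),
          (∀ ω, 0 ≤ p ω) ∧ (∑ ω, p ω = 1) ∧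
          (∀ ω : Fin N, ((H ω).edgeSet.ncard : ℝ) ≤ C * (n : ℝ) * ν⁻¹ * Real.logb 2 n) ∧
          ∀ B : Set (Fin n), ∃ Bp : Fin N → Set (Fin n),
            (∀ ω, B ⊆ Bp ω) ∧
            (∀ (ω : Fin N) (a b : Fin n), a < b → a ∉ Bp ω → b ∉ Bp ω →
              ∃ c : Fin n, c ∉ B ∧ c ≤ a ∧
                (c = a ∨ (H ω).Adj c a) ∧ (H ω).Adj c b) ∧
            (∑ ω, p ω * ((Bp ω).ncard : ℝ)) ≤ (1 + ν) * (B.ncard : ℝ) := by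
  refine ⟨7, by norm_num, fun ν hν hν1 n hn => ?_⟩
  set L := Nat.log 2 n + 1
  set r := ⌈2 / ν⌉₊
  have hnL : n ≤ 2 ^ L := (Nat.lt_pow_succ_log_self one_lt_two n).le
  have hr := two_le_ceil_two_div hν hν1
  set N := Fintype.card (Sample L r)
  have hN : (0 : ℝ) < N := by exact_mod_cast Fintype.card_pos
  let e := (Fintype.equivFin (Sample L r)).symm
  refine ⟨N, fun _ => (N : ℝ)⁻¹, fun ω => hubGraph n (hubs (e ω)), fun _ => by positivity,
    by simp [hN.ne'], fun ω => ?_, fun B => ?_⟩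
  · calc ((hubGraph n (hubs (e ω))).edgeSet.ncard : ℝ) ≤ ((L * r + 1) * n : ℕ) := by
          exact_mod_cast (ncard_edgeSet_hubGraph_le n _).trans
            (Nat.mul_le_mul_right n (card_hubs_le _))
      _ ≤ 7 * n * ν⁻¹ * Real.logb 2 n := log_add_one_mul_ceil_add_one_mul_le hν hν1 hn
  · let Bp (g : Sample L r) := B ∪ {a | Uncovered (hubs g) (natFinset B) a}
    refine ⟨fun ω => Bp (e ω), fun _ => Set.subset_union_left,
      fun ω a b hab ha _ => exists_two_hop_of_not_uncovered hab fun h => ha (Or.inr h), ?_⟩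
    rw [← mul_sum, e.sum_comp fun g => ((Bp g).ncard : ℝ)]
    calc (N : ℝ)⁻¹ * ∑ g, ((Bp g).ncard : ℝ)
        ≤ (N : ℝ)⁻¹ * (N * ((1 + 1 / (r - 1)) * B.ncard)) := by
          gcongr
          exact sum_ncard_union_uncovered_le hnL hr B
      _ ≤ (1 + ν) * B.ncard := by
          rw [inv_mul_cancel_left₀ hN.ne']
          gcongr
          exact one_div_ceil_two_div_sub_one_le hν hν1
end

section
/- Let G = (V,E,w) be a connected weighted graph on n ≥ 2 vertices with positive edge weights, and suppose G is hereditarily k-separable: for every subset V' ⊆ V there is a set K ⊆ V' with |K| ≤ k such that every connected component of the induced subgraph G[V' ∖ K] has at most |V'|/2 vertices. Then the shortest-path metric d_G of G admits a (k·(⌊log₂ n⌋ + 1), 1)-left-sided LSO. -/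
/-!
Split the graph recursively by separators: the depth-`(j+1)` cluster of `x` is the component of
`x` in its depth-`j` cluster minus that cluster's separator. Clusters at least halve in size, so
every vertex falls into a separator within `⌊log₂ n⌋ + 1` levels. For every level `j` and every
separator vertex `v` of a depth-`j` cluster, order that cluster by distance from `v`; a vertex lies
in at most `k` of these orderings per level. A shortest `x`–`y` path stays inside the clusters of
`x` until it meets a separator vertex `v` of one of them, and then in the ordering centred at `v`
every `x' ⪯ x`, `y' ⪯ y` satisfy `d(x',y') ≤ d(x',v) + d(v,y') ≤ d(x,v) + d(v,y) = d(x,y)`.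
-/
open scoped BigOperators

/-- `l` is a walk from `x` to `y` w.r.t. the adjacency relation `Adj`, all of
whose vertices lie in `S`. -/
def IsWalkIn {X : Type*} (Adj : X → X → Prop) (S : Set X) (l : List X) (x y : X) : Prop :=
  l.Chain' Adj ∧ l.head? = some x ∧ l.getLast? = some y ∧ ∀ z ∈ l, z ∈ S

/-- The total weight of the walk `l` w.r.t. the edge-weight function `w`. -/
def walkWeight {X : Type*} (w : X → X → ℝ) (l : List X) : ℝ :=
  ((l.zip l.tail).map fun p => w p.1 p.2).sum

/-- `(τ,ρ)`-left-sided LSO for `X` with distance function `d`: a collection of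
partial orderings (each a linear ordering, via an injective real-valued
function, of a subset `Dom i` of `X`) such that every point belongs to at most
`τ` of the domains, and every pair `x,y` has an ordering containing both with:
for all `x' ⪯ x` and `y' ⪯ y` in the domain, `d(x',y') ≤ ρ·d(x,y)`. -/
def IsLeftLSO {X : Type*} (d : X → X → ℝ) (τ ρ : ℝ) : Prop :=
  ∃ (s : ℕ) (Dom : Fin s → Set X) (σ : Fin s → X → ℝ),
    (∀ i, Set.InjOn (σ i) (Dom i)) ∧
    (∀ x : X, (({i | x ∈ Dom i} : Set (Fin s)).ncard : ℝ) ≤ τ) ∧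
    ∀ x y : X, ∃ i, x ∈ Dom i ∧ y ∈ Dom i ∧
      ∀ x' ∈ Dom i, ∀ y' ∈ Dom i, σ i x' ≤ σ i x → σ i y' ≤ σ i y →
        d x' y' ≤ ρ * d x y

open Set

section Walks

variable {X : Type*} {Adj : X → X → Prop} {S : Set X} {w : X → X → ℝ}

@[simp] lemma walkWeight_cons_cons (x y : X) (l : List X) :
    walkWeight w (x :: y :: l) = w x y + walkWeight w (y :: l) := by
  simp [walkWeight]

lemma walkWeight_append_cons (a : List X) (v : X) (b : List X) :
    walkWeight w (a ++ v :: b) = walkWeight w (a ++ [v]) + walkWeight w (v :: b) := by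
  induction a with
  | nil => simp [walkWeight]
  | cons x a ih =>
    cases a with
    | nil => simp [walkWeight]
    | cons y a => simp only [List.cons_append, walkWeight_cons_cons] at ih ⊢; rw [ih]; ring

lemma walkWeight_reverse (hw : ∀ u v, w u v = w v u) (l : List X) :
    walkWeight w l.reverse = walkWeight w l := by
  induction l with
  | nil => rfl
  | cons x l ih =>
    cases l with
    | nil => rfl
    | cons y l =>
      rw [List.reverse_cons, List.reverse_cons, List.append_assoc, List.singleton_append,
        walkWeight_append_cons, ← List.reverse_cons, ih]
      simp [walkWeight, hw y x, add_comm]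

namespace IsWalkIn

variable {l : List X} {x y : X}

lemma head_mem (h : IsWalkIn Adj S l x y) : x ∈ l := List.mem_of_mem_head? h.2.1

lemma getLast_mem (h : IsWalkIn Adj S l x y) : y ∈ l := List.mem_of_mem_getLast? h.2.2.1

lemma subset (h : IsWalkIn Adj S l x y) : ∀ z ∈ l, z ∈ S := h.2.2.2

lemma reverse (hA : ∀ u v, Adj u v → Adj v u) (h : IsWalkIn Adj S l x y) :
    IsWalkIn Adj S l.reverse y x := by
  obtain ⟨hc, hx, hy, hS⟩ := h
  refine ⟨?_, by rwa [List.head?_reverse], by rwa [List.getLast?_reverse], by simpa using hS⟩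
  exact List.isChain_reverse.mpr (hc.imp fun a b => hA a b)

lemma exists_append {z : X} {l' : List X} (h : IsWalkIn Adj S l x y)
    (h' : IsWalkIn Adj S l' y z) :
    ∃ m, IsWalkIn Adj S m x z ∧ ∀ w, walkWeight w m = walkWeight w l + walkWeight w l' := by
  obtain ⟨hc, hx, hy, hS⟩ := h
  obtain ⟨hc', hy', hz, hS'⟩ := h'
  obtain ⟨a, rfl⟩ : ∃ a, l = a ++ [y] := ⟨l.dropLast, (List.dropLast_append_getLast? y hy).symm⟩
  obtain ⟨b, rfl⟩ : ∃ b, l' = y :: b := List.head?_eq_some_iff.mp hy'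
  refine ⟨a ++ y :: b, ⟨List.isChain_split.mpr ⟨hc, hc'⟩, ?_, ?_, ?_⟩,
    fun w => walkWeight_append_cons a y b⟩
  · simpa [List.head?_append] using hx
  · simpa [List.getLast?_append] using hz
  · simpa [or_imp, forall_and] using And.intro (fun z hz => hS z (by simp [hz])) hS'

lemma exists_split {v : X} (h : IsWalkIn Adj S l x y) (hv : v ∈ l) :
    ∃ l₁ l₂, IsWalkIn Adj S l₁ x v ∧ IsWalkIn Adj S l₂ v y ∧
      ∀ w, walkWeight w l₁ + walkWeight w l₂ = walkWeight w l := by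
  obtain ⟨a, b, rfl⟩ := List.append_of_mem hv
  obtain ⟨hc, hx, hy, hS⟩ := h
  obtain ⟨hca, hcb⟩ := List.isChain_split.mp hc
  refine ⟨a ++ [v], v :: b, ⟨hca, ?_, by simp, ?_⟩, ⟨hcb, rfl, ?_, ?_⟩,
    fun w => (walkWeight_append_cons a v b).symm⟩
  · simpa [List.head?_append] using hx
  · simpa [or_imp, forall_and] using And.intro (fun z hz => hS z (by simp [hz])) (hS v (by simp))
  · simpa [List.getLast?_append] using hy
  · exact fun z hz => hS z (by simp [hz])

end IsWalkIn

end Walks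

section ShortestWalkDist

variable {X : Type*} {Adj : X → X → Prop} {w : X → X → ℝ} {d : X → X → ℝ}

def IsShortestWalkDist (Adj : X → X → Prop) (w d : X → X → ℝ) : Prop :=
  ∀ u v, (∃ l, IsWalkIn Adj univ l u v ∧ walkWeight w l = d u v) ∧
    ∀ l, IsWalkIn Adj univ l u v → d u v ≤ walkWeight w l

namespace IsShortestWalkDist

lemma symm (hd : IsShortestWalkDist Adj w d) (hA : ∀ u v, Adj u v → Adj v u)
    (hw : ∀ u v, w u v = w v u) (u v : X) : d u v = d v u := by
  have key : ∀ u v, d u v ≤ d v u := fun u v => by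
    obtain ⟨l, hl, hlw⟩ := (hd v u).1
    simpa [walkWeight_reverse hw, hlw] using (hd u v).2 _ (hl.reverse hA)
  exact (key u v).antisymm (key v u)

lemma triangle (hd : IsShortestWalkDist Adj w d) (x y z : X) : d x z ≤ d x y + d y z := by
  obtain ⟨l₁, h₁, hw₁⟩ := (hd x y).1
  obtain ⟨l₂, h₂, hw₂⟩ := (hd y z).1
  obtain ⟨l, hl, hw⟩ := h₁.exists_append h₂
  simpa [hw w, hw₁, hw₂] using (hd x z).2 l hl

lemma add_le_of_mem (hd : IsShortestWalkDist Adj w d) {l : List X} {x y v : X}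
    (hl : IsWalkIn Adj univ l x y) (hlw : walkWeight w l = d x y) (hv : v ∈ l) :
    d x v + d v y ≤ d x y := by
  obtain ⟨l₁, l₂, h₁, h₂, hw⟩ := hl.exists_split hv
  linarith [hw w, (hd x v).2 l₁ h₁, (hd v y).2 l₂ h₂]

end IsShortestWalkDist

end ShortestWalkDist

lemma exists_injective_le_imp_le {X : Type*} [Finite X] (f : X → ℝ) :
    ∃ g : X → ℝ, Function.Injective g ∧ ∀ a b, g a ≤ g b → f a ≤ f b := by
  obtain ⟨e, he⟩ := Countable.exists_injective_nat X
  let key : X → ℝ ×ₗ ℕ := fun x => toLex (f x, e x)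
  have key_inj : Function.Injective key := fun a b h => he (Prod.ext_iff.mp (toLex.injective h)).2
  let rank : X → ℕ := fun x => {y | key y < key x}.ncard
  have rank_strictMono : ∀ a b, key a < key b → rank a < rank b := fun a b hab =>
    ncard_lt_ncard ⟨fun y hy => lt_trans hy hab, fun h => lt_irrefl (key a) (h hab)⟩
  have key_le : ∀ a b, rank a ≤ rank b → key a ≤ key b := fun a b h =>
    not_lt.mp fun hba => (rank_strictMono b a hba).not_ge h
  refine ⟨fun x => rank x, fun a b h => key_inj ?_, fun a b h => ?_⟩
  · have h' : rank a = rank b := Nat.cast_injective h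
    exact (key_le a b h'.le).antisymm (key_le b a h'.ge)
  · rcases Prod.Lex.le_iff.mp (key_le a b (Nat.cast_le.mp h)) with hlt | ⟨heq, -⟩
    · exact hlt.le
    · exact heq.le

lemma isLeftLSO_of_finite_index {X ι : Type*} [Fintype ι] {d : X → X → ℝ} {τ ρ : ℝ}
    (Dom : ι → Set X) (σ : ι → X → ℝ) (hinj : ∀ i, InjOn (σ i) (Dom i))
    (hcount : ∀ x, ({i | x ∈ Dom i}.ncard : ℝ) ≤ τ)
    (hcover : ∀ x y, ∃ i, x ∈ Dom i ∧ y ∈ Dom i ∧ ∀ x' ∈ Dom i, ∀ y' ∈ Dom i,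
      σ i x' ≤ σ i x → σ i y' ≤ σ i y → d x' y' ≤ ρ * d x y) :
    IsLeftLSO d τ ρ := by
  let e := (Fintype.equivFin ι).symm
  refine ⟨Fintype.card ι, Dom ∘ e, σ ∘ e, fun i => hinj (e i), fun x => ?_, fun x y => ?_⟩
  · have : (e ⁻¹' {i | x ∈ Dom i}).ncard = {i | x ∈ Dom i}.ncard :=
      ncard_preimage_of_injective_subset_range e.injective (by simp)
    exact (congrArg (Nat.cast : ℕ → ℝ) this).trans_le (hcount x)
  · obtain ⟨i, hx, hy, h⟩ := hcover x y
    exact ⟨e.symm i, by simpa using hx, by simpa using hy, by simpa using h⟩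

lemma isLeftLSO_of_centers {X ι : Type*} [Finite X] [Fintype ι] {d : X → X → ℝ} {τ : ℝ}
    (hsymm : ∀ x y, d x y = d y x) (htri : ∀ x y z, d x z ≤ d x y + d y z)
    (Dom : ι → Set X) (c : ι → X) (hcount : ∀ x, ({i | x ∈ Dom i}.ncard : ℝ) ≤ τ)
    (hcover : ∀ x y, ∃ i, x ∈ Dom i ∧ y ∈ Dom i ∧ d x (c i) + d (c i) y ≤ d x y) :
    IsLeftLSO d τ 1 := by
  choose σ hσinj hσ using fun i => exists_injective_le_imp_le (d (c i))
  refine isLeftLSO_of_finite_index Dom σ (fun i => (hσinj i).injOn) hcount fun x y => ?_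
  obtain ⟨i, hx, hy, hxy⟩ := hcover x y
  refine ⟨i, hx, hy, fun x' _ y' _ hx' hy' => ?_⟩
  calc d x' y' ≤ d (c i) x' + d (c i) y' := by linarith [htri x' (c i) y', hsymm x' (c i)]
    _ ≤ d (c i) x + d (c i) y := add_le_add (hσ i x' x hx') (hσ i y' y hy')
    _ ≤ 1 * d x y := by linarith [hsymm x (c i)]

section SeparatorHierarchy

variable {X : Type*} {Adj : X → X → Prop} {sep : Set X → Set X} {S : Set X} {x y : X}

variable (Adj) in
def walkComponent (S : Set X) (x : X) : Set X :=
  {v | v ∈ S ∧ ∃ l, IsWalkIn Adj S l x v}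

lemma walkComponent_eq_empty (hx : x ∉ S) : walkComponent Adj S x = ∅ :=
  eq_empty_of_forall_notMem fun _ ⟨_, _, hl⟩ => hx (hl.subset x hl.head_mem)

lemma walkComponent_eq_of_mem (hA : ∀ u v, Adj u v → Adj v u) (hy : y ∈ walkComponent Adj S x) :
    walkComponent Adj S y = walkComponent Adj S x := by
  obtain ⟨-, l, hl⟩ := hy
  ext z
  refine ⟨fun ⟨hz, m, hm⟩ => ⟨hz, ?_⟩, fun ⟨hz, m, hm⟩ => ⟨hz, ?_⟩⟩
  · exact (hl.exists_append hm).imp fun _ h => h.1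
  · exact ((hl.reverse hA).exists_append hm).imp fun _ h => h.1

variable (Adj sep) in
def cluster (x : X) (j : ℕ) : Set X :=
  (fun S => walkComponent Adj (S \ sep S) x)^[j] univ

lemma cluster_succ (x : X) (j : ℕ) :
    cluster Adj sep x (j + 1) =
      walkComponent Adj (cluster Adj sep x j \ sep (cluster Adj sep x j)) x :=
  Function.iterate_succ_apply' _ _ _

lemma cluster_succ_subset (x : X) (j : ℕ) : cluster Adj sep x (j + 1) ⊆ cluster Adj sep x j := by
  rw [cluster_succ]
  exact fun _ hv => hv.1.1

lemma cluster_eq_of_mem (hA : ∀ u v, Adj u v → Adj v u) {j : ℕ} :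
    y ∈ cluster Adj sep x j → cluster Adj sep y j = cluster Adj sep x j := by
  induction j generalizing y with
  | zero => exact fun _ => rfl
  | succ j ih =>
    intro hy
    have hyx := ih (cluster_succ_subset x j hy)
    rw [cluster_succ] at hy ⊢
    rw [cluster_succ, hyx, walkComponent_eq_of_mem hA hy]

lemma ncard_cluster_le [Finite X]
    (hhalf : ∀ S, ∀ u ∈ S \ sep S, ((walkComponent Adj (S \ sep S) u).ncard : ℝ) ≤ S.ncard / 2)
    (x : X) (j : ℕ) : ((cluster Adj sep x j).ncard : ℝ) ≤ Nat.card X / 2 ^ j := by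
  induction j with
  | zero => simp [cluster]
  | succ j ih =>
    rw [cluster_succ]
    by_cases hx : x ∈ cluster Adj sep x j \ sep (cluster Adj sep x j)
    · calc _ ≤ ((cluster Adj sep x j).ncard : ℝ) / 2 := hhalf _ x hx
        _ ≤ Nat.card X / 2 ^ j / 2 := by gcongr
        _ = Nat.card X / 2 ^ (j + 1) := by ring
    · simp only [walkComponent_eq_empty hx, ncard_empty, Nat.cast_zero]
      positivity

lemma cluster_eq_empty [Finite X]
    (hhalf : ∀ S, ∀ u ∈ S \ sep S, ((walkComponent Adj (S \ sep S) u).ncard : ℝ) ≤ S.ncard / 2)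
    {L : ℕ} (hL : Nat.card X < 2 ^ L) (x : X) : cluster Adj sep x L = ∅ := by
  have hlt : ((cluster Adj sep x L).ncard : ℝ) < 1 := by
    refine (ncard_cluster_le hhalf x L).trans_lt ?_
    rw [div_lt_one (by positivity)]
    exact_mod_cast hL
  exact (ncard_eq_zero (toFinite _)).mp (Nat.lt_one_iff.mp (by exact_mod_cast hlt))

lemma IsWalkIn.subset_cluster_succ {l : List X} {j : ℕ} (hl : IsWalkIn Adj S l x y)
    (hj : ∀ z ∈ l, z ∈ cluster Adj sep x j) (hsep : ∀ z ∈ l, z ∉ sep (cluster Adj sep x j)) :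
    ∀ z ∈ l, z ∈ cluster Adj sep x (j + 1) := by
  have hl' : IsWalkIn Adj (cluster Adj sep x j \ sep (cluster Adj sep x j)) l x y :=
    ⟨hl.1, hl.2.1, hl.2.2.1, fun z hz => ⟨hj z hz, hsep z hz⟩⟩
  intro z hz
  obtain ⟨l₁, -, h₁, -⟩ := hl'.exists_split hz
  rw [cluster_succ]
  exact ⟨⟨hj z hz, hsep z hz⟩, l₁, h₁⟩

lemma IsWalkIn.exists_mem_sep_cluster {l : List X} {L : ℕ} (hL : cluster Adj sep x L = ∅)
    (hl : IsWalkIn Adj S l x y) :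
    ∃ j < L, (∀ z ∈ l, z ∈ cluster Adj sep x j) ∧ ∃ v ∈ l, v ∈ sep (cluster Adj sep x j) := by
  classical
  have hexit : ¬ ∀ z ∈ l, z ∈ cluster Adj sep x L := fun h => by simpa [hL] using h x hl.head_mem
  have hex : ∃ j, ¬ ∀ z ∈ l, z ∈ cluster Adj sep x j := ⟨L, hexit⟩
  obtain ⟨j, hj⟩ : ∃ j, Nat.find hex = j + 1 :=
    Nat.exists_eq_succ_of_ne_zero fun h0 =>
      Nat.find_spec hex (by rw [h0]; exact fun z _ => mem_univ z)
  have hsub : ∀ z ∈ l, z ∈ cluster Adj sep x j := not_not.mp (Nat.find_min hex (by omega))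
  refine ⟨j, by have := Nat.find_min' hex hexit; omega, hsub, ?_⟩
  by_contra! hsep
  exact Nat.find_spec hex (hj ▸ hl.subset_cluster_succ hsub hsep)

end SeparatorHierarchy

lemma ncard_setOf_snd_mem_le {ι X : Type*} [Fintype ι] (A : ι → Set X) {k : ℕ}
    (hA : ∀ i, (A i).ncard ≤ k) : {p : ι × X | p.2 ∈ A p.1}.ncard ≤ Fintype.card ι * k := by
  have : {p : ι × X | p.2 ∈ A p.1} = ⋃ i, Prod.mk i '' A i := by
    ext ⟨i, x⟩
    simp
  calc _ ≤ ∑ i, (Prod.mk i '' A i).ncard := this ▸ ncard_iUnion_le_of_fintype _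
    _ = ∑ i, (A i).ncard := by simp [ncard_image_of_injective _ (Prod.mk_right_injective _)]
    _ ≤ Fintype.card ι * k := (Finset.sum_le_sum fun i _ => hA i).trans_eq (by simp)

theorem separable_graph_left_LSO_general
    (V : Type) [Fintype V] (G : SimpleGraph V) (w : V → V → ℝ) (k : ℕ)
    (hwsym : ∀ u v : V, w u v = w v u)
    (dG : V → V → ℝ)
    (hdG : ∀ u v : V,
      (∃ l : List V, IsWalkIn G.Adj Set.univ l u v ∧ walkWeight w l = dG u v) ∧
      ∀ l : List V, IsWalkIn G.Adj Set.univ l u v → dG u v ≤ walkWeight w l)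
    (hsep : ∀ V' : Set V, ∃ K : Set V, K ⊆ V' ∧ (K.ncard : ℝ) ≤ (k : ℝ) ∧
      ∀ u ∈ V' \ K,
        (({v | v ∈ V' \ K ∧ ∃ l : List V, IsWalkIn G.Adj (V' \ K) l u v} : Set V).ncard : ℝ)
          ≤ (V'.ncard : ℝ) / 2) :
    IsLeftLSO dG ((k : ℝ) * ((Nat.log 2 (Fintype.card V) : ℝ) + 1)) 1 := by
  choose sep _ hsep_card hsep_half using hsep
  have hd : IsShortestWalkDist G.Adj w dG := hdG
  have hA : ∀ u v, G.Adj u v → G.Adj v u := fun _ _ h => h.symm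
  set L := Nat.log 2 (Fintype.card V) + 1
  have hempty : ∀ x, cluster G.Adj sep x L = ∅ := cluster_eq_empty hsep_half
    (by simpa using Nat.lt_pow_succ_log_self one_lt_two (Fintype.card V))
  -- `{x | v ∈ sep (cluster x j)}` is the depth-`j` cluster of `v` if `v` is one of its
  -- separator vertices, and empty otherwise.
  refine isLeftLSO_of_centers (hd.symm hA hwsym) hd.triangle
    (fun p : Fin L × V => {x | p.2 ∈ sep (cluster G.Adj sep x p.1)}) Prod.snd
    (fun x => ?_) (fun x y => ?_)
  · have := ncard_setOf_snd_mem_le (fun j : Fin L => sep (cluster G.Adj sep x j))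
      fun j => Nat.cast_le.mp (hsep_card _)
    calc _ ≤ ((Fintype.card (Fin L) * k : ℕ) : ℝ) := Nat.cast_le.mpr this
      _ = _ := by push_cast [Fintype.card_fin, L]; ring
  · obtain ⟨l, hl, hlw⟩ := (hdG x y).1
    obtain ⟨j, hjL, hsub, v, hvl, hv⟩ := hl.exists_mem_sep_cluster (hempty x)
    refine ⟨(⟨j, hjL⟩, v), hv, ?_, hd.add_le_of_mem hl hlw hvl⟩
    change v ∈ sep (cluster G.Adj sep y j)
    rwa [cluster_eq_of_mem hA (hsub y hl.getLast_mem)]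

/-- Let `G` be a connected weighted graph on `n ≥ 2` vertices with positive
symmetric edge weights, whose shortest-path metric is `dG` (characterized as
the minimum total weight of a walk). Suppose `G` is hereditarily `k`-separable:
every vertex subset `V'` has a separator `K ⊆ V'` of size at most `k` such that
every connected component of the subgraph induced on `V' \ K` has at most
`|V'|/2` vertices. Then `dG` admits a `(k·(⌊log₂ n⌋ + 1), 1)`-left-sided LSO. -/
theorem separable_graph_left_LSO
    (V : Type) [Fintype V] (G : SimpleGraph V) (w : V → V → ℝ) (k : ℕ)
    (hn : 2 ≤ Fintype.card V)
    (hconn : G.Connected)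
    (hwsym : ∀ u v : V, w u v = w v u)
    (hwpos : ∀ u v : V, G.Adj u v → 0 < w u v)
    (dG : V → V → ℝ)
    (hdG : ∀ u v : V,
      (∃ l : List V, IsWalkIn G.Adj Set.univ l u v ∧ walkWeight w l = dG u v) ∧
      ∀ l : List V, IsWalkIn G.Adj Set.univ l u v → dG u v ≤ walkWeight w l)
    (hsep : ∀ V' : Set V, ∃ K : Set V, K ⊆ V' ∧ (K.ncard : ℝ) ≤ (k : ℝ) ∧
      ∀ u ∈ V' \ K,
        (({v | v ∈ V' \ K ∧ ∃ l : List V, IsWalkIn G.Adj (V' \ K) l u v} : Set V).ncard : ℝ)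
          ≤ (V'.ncard : ℝ) / 2) :
    IsLeftLSO dG ((k : ℝ) * ((Nat.log 2 (Fintype.card V) : ℝ) + 1)) 1 :=
  separable_graph_left_LSO_general V G w k hwsym dG hdG hsep
end

section
/- For every integer k ≥ 2 there exist a constant c > 0 and an integer n₀ such that for every n ≥ n₀ there is an n-vertex simple graph G with the property that every oblivious g-reliable connectivity preserver of G, where g(x) = x^k, has at least c·n^{1+1/k} edges. -/
open scoped BigOperators

/-- An oblivious `g`-reliable connectivity preserver of `G` with at most `m`
edges: a (finitely supported) probability distribution over subgraphs `H ω ≤ G`,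
each with at most `m` edges, such that for every attack set `B` there are sets
`Bp ω ⊇ B` with `E[|Bp|] ≤ g(|B|)`, and every `u,v ∉ Bp ω` that are connected
in `G ∖ B` are also connected in `H ω ∖ B`. -/
def IsObliviousConnPreserver {V : Type*} [Fintype V] (G : SimpleGraph V)
    (g : ℕ → ℕ) (m : ℝ) : Prop :=
  ∃ (N : ℕ) (p : Fin N → ℝ) (H : Fin N → SimpleGraph V),
    (∀ ω, 0 ≤ p ω) ∧ (∑ ω, p ω = 1) ∧
    (∀ ω, H ω ≤ G) ∧
    (∀ ω : Fin N, ((H ω).edgeSet.ncard : ℝ) ≤ m) ∧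
    ∀ B : Set V, ∃ Bp : Fin N → Set V,
      (∀ ω, B ⊆ Bp ω) ∧
      (∀ (ω : Fin N) (u v : V), u ∉ Bp ω → v ∉ Bp ω →
        (∃ l : List V, IsWalkIn G.Adj Bᶜ l u v) →
        ∃ l : List V, IsWalkIn (H ω).Adj Bᶜ l u v) ∧
      (∑ ω, p ω * ((Bp ω).ncard : ℝ)) ≤ (g B.ncard : ℝ)

/-!
Take for `G` the complete bipartite graph between a set `L` of `d ≈ n^{1/k} / 8` vertices and the
remaining vertices. Attacking `L \ {a, b}` leaves `Lᶜ` connected through `a`, so among the vertices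
of `Lᶜ` that have no `H`-edge to `a` or `b` at most one may stay unexcused, and in expectation at
most `d^k + 1` of them exist. Averaging over all `d²` pairs `(a, b)`, some `H` in the support has
`∑_{r ∉ L} |L \ N_H(r)|² ≤ d² (d^k + 1)`, so all but `O(d^k) ≪ n` vertices of `Lᶜ` keep `H`-degree
`≳ d`, and `H` has `≳ n d ≈ n^{1 + 1/k}` edges.
-/

open Finset

section Walks

variable {X : Type*} {Adj : X → X → Prop} {S : Set X} {l : List X} {x y : X}

lemma IsWalkIn.exists_adj_of_ne (h : IsWalkIn Adj S l x y) (hxy : x ≠ y) :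
    ∃ z, Adj x z ∧ z ∈ S := by
  obtain ⟨hchain, hhead, hlast, hmem⟩ := h
  match l, hhead with
  | _ :: [], hhead => simp_all
  | _ :: z :: _, hhead =>
    obtain rfl : _ = x := by simpa using hhead
    exact ⟨z, (List.isChain_cons_cons.mp hchain).1, hmem z (by simp)⟩

lemma isWalkIn_of_adj_of_adj {z : X} (hxz : Adj x z) (hzy : Adj z y) (hx : x ∈ S) (hz : z ∈ S)
    (hy : y ∈ S) : IsWalkIn Adj S [x, z, y] x y :=
  ⟨List.isChain_cons_cons.mpr ⟨hxz, List.isChain_pair.mpr hzy⟩, rfl, rfl, by simp [hx, hy, hz]⟩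

end Walks

lemma exists_le_of_sum_mul_le {ι : Type*} [Fintype ι] {p f : ι → ℝ} {S : ℝ}
    (hp0 : ∀ i, 0 ≤ p i) (hp1 : ∑ i, p i = 1) (hS : ∑ i, p i * f i ≤ S) : ∃ i, f i ≤ S := by
  have hne : (univ : Finset ι).Nonempty := nonempty_of_sum_ne_zero (by rw [hp1]; exact one_ne_zero)
  obtain ⟨i, -, hmin⟩ := univ.exists_min_image f hne
  refine ⟨i, ?_⟩
  calc f i = ∑ j, p j * f i := by rw [← sum_mul, hp1, one_mul]
    _ ≤ ∑ j, p j * f j :=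
      sum_le_sum fun j _ => mul_le_mul_of_nonneg_left (hmin j (mem_univ j)) (hp0 j)
    _ ≤ S := hS

def completeBipartiteBetween {V : Type*} (L : Finset V) : SimpleGraph V where
  Adj u v := (u ∈ L ↔ v ∉ L)
  symm := ⟨fun _ _ => by tauto⟩
  loopless := ⟨fun _ => by tauto⟩

section Counting

open Classical

variable {V : Type*} [Fintype V] [DecidableEq V]

/-- Once `L \ {a, b}` is deleted these vertices are isolated in `H`, although `Lᶜ` stays connected
through `a` in the complete bipartite graph. -/
noncomputable def stranded (H : SimpleGraph V) (L : Finset V) (a b : V) : Finset V :=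
  Lᶜ.filter fun r => ¬H.Adj r a ∧ ¬H.Adj r b

lemma sum_card_stranded_eq (H : SimpleGraph V) (L : Finset V) :
    ∑ q ∈ L ×ˢ L, #(stranded H L q.1 q.2) = ∑ r ∈ Lᶜ, #(L \ H.neighborFinset r) ^ 2 := by
  simp only [stranded, card_filter]
  rw [sum_comm]
  refine sum_congr rfl fun r _ => ?_
  rw [sq, ← card_product, ← card_filter]
  congr 1
  ext q
  simp only [mem_filter, mem_product, mem_sdiff, SimpleGraph.mem_neighborFinset]
  tauto

lemma card_le_card_sdiff_neighborFinset_add_degree (H : SimpleGraph V) (L : Finset V) (r : V) :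
    #L ≤ #(L \ H.neighborFinset r) + H.degree r := by
  rw [← card_sdiff_add_card_inter L (H.neighborFinset r), ← H.card_neighborFinset_eq_degree]
  exact Nat.add_le_add_left (card_le_card inter_subset_right) _

lemma card_compl_mul_sq_le (H : SimpleGraph V) (L : Finset V) :
    #Lᶜ * #L ^ 2 ≤ 4 * #L * #H.edgeFinset + 4 * ∑ q ∈ L ×ˢ L, #(stranded H L q.1 q.2) := by
  have hvertex : ∀ r, #L ^ 2 ≤ 2 * #L * H.degree r + 4 * #(L \ H.neighborFinset r) ^ 2 := by
    intro r
    nlinarith [Nat.mul_le_mul_left (2 * #L) (card_le_card_sdiff_neighborFinset_add_degree H L r)]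
  have hdeg : ∑ r ∈ Lᶜ, H.degree r ≤ 2 * #H.edgeFinset :=
    H.sum_degrees_eq_twice_card_edges ▸ sum_le_sum_of_subset (subset_univ _)
  calc #Lᶜ * #L ^ 2 = ∑ r ∈ Lᶜ, #L ^ 2 := by rw [sum_const, smul_eq_mul]
    _ ≤ ∑ r ∈ Lᶜ, (2 * #L * H.degree r + 4 * #(L \ H.neighborFinset r) ^ 2) :=
      sum_le_sum fun r _ => hvertex r
    _ ≤ 4 * #L * #H.edgeFinset + 4 * ∑ q ∈ L ×ˢ L, #(stranded H L q.1 q.2) := by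
      rw [sum_add_distrib, ← mul_sum, ← mul_sum, sum_card_stranded_eq]
      nlinarith

lemma card_stranded_le_ncard_add_one {H : SimpleGraph V} (hH : H ≤ completeBipartiteBetween L)
    {a b : V} (ha : a ∈ L) {Bp : Set V}
    (hpres : ∀ u v, u ∉ Bp → v ∉ Bp →
      (∃ l, IsWalkIn (completeBipartiteBetween L).Adj (↑(L \ {a, b}))ᶜ l u v) →
      ∃ l, IsWalkIn H.Adj (↑(L \ {a, b}))ᶜ l u v) :
    #(stranded H L a b) ≤ Bp.ncard + 1 := by
  have hsurvivors : #((stranded H L a b).filter (· ∉ Bp)) ≤ 1 := by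
    refine card_le_one.mpr fun u hu v hv => by_contra fun huv => ?_
    simp only [stranded, mem_filter, mem_compl] at hu hv
    have haB : a ∉ (↑(L \ {a, b}) : Set V) := by simp
    have huB : u ∉ (↑(L \ {a, b}) : Set V) := by simp [hu.1.1]
    have hvB : v ∉ (↑(L \ {a, b}) : Set V) := by simp [hv.1.1]
    obtain ⟨l, hl⟩ := hpres u v hu.2 hv.2
      ⟨_, isWalkIn_of_adj_of_adj (z := a) (by simp [completeBipartiteBetween, hu.1.1, ha])
        (by simp [completeBipartiteBetween, hv.1.1, ha]) huB haB hvB⟩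
    obtain ⟨z, huz, hzB⟩ := hl.exists_adj_of_ne huv
    have hzL : z ∈ L := by simpa [completeBipartiteBetween, hu.1.1] using hH huz
    have hz : z = a ∨ z = b := by simpa [hzL, or_iff_not_imp_left] using hzB
    rcases hz with rfl | rfl
    exacts [hu.1.2.1 huz, hu.1.2.2 huz]
  have hexcused : #((stranded H L a b).filter (· ∈ Bp)) ≤ Bp.ncard := by
    rw [← Set.ncard_coe_finset]
    exact Set.ncard_le_ncard (fun r hr => (mem_filter.mp hr).2) (Set.toFinite _)
  have hsplit := card_filter_add_card_filter_not (s := stranded H L a b) (· ∈ Bp)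
  omega

lemma exists_subgraph_sum_card_stranded_le {L : Finset V} {g : ℕ → ℕ} (hg : Monotone g) {m : ℝ}
    (h : IsObliviousConnPreserver (completeBipartiteBetween L) g m) :
    ∃ H : SimpleGraph V, (#H.edgeFinset : ℝ) ≤ m ∧
      (∑ q ∈ L ×ˢ L, #(stranded H L q.1 q.2) : ℝ) ≤ #L ^ 2 * (g #L + 1) := by
  obtain ⟨N, p, H, hp0, hp1, hHG, hHm, hattack⟩ := h
  choose Bp _ hpres hbudget using fun q : V × V => hattack ↑(L \ {q.1, q.2})
  have hpair : ∀ q ∈ L ×ˢ L, ∑ ω, p ω * (#(stranded (H ω) L q.1 q.2) : ℝ) ≤ g #L + 1 := by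
    intro q hq
    have hB : (↑(L \ {q.1, q.2}) : Set V).ncard ≤ #L := by
      rw [Set.ncard_coe_finset]; exact card_le_card sdiff_subset
    calc ∑ ω, p ω * (#(stranded (H ω) L q.1 q.2) : ℝ)
        ≤ ∑ ω, p ω * ((Bp q ω).ncard + 1 : ℝ) := by
          refine sum_le_sum fun ω _ => mul_le_mul_of_nonneg_left ?_ (hp0 ω)
          exact_mod_cast card_stranded_le_ncard_add_one (hHG ω) (mem_product.mp hq).1 (hpres q ω)
      _ = ∑ ω, p ω * (Bp q ω).ncard + 1 := by simp only [mul_add_one, sum_add_distrib, hp1]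
      _ ≤ g #L + 1 := by
          gcongr
          exact (hbudget q).trans (by exact_mod_cast hg hB)
  obtain ⟨ω, hω⟩ := exists_le_of_sum_mul_le hp0 hp1 (f := fun ω => ∑ q ∈ L ×ˢ L,
    (#(stranded (H ω) L q.1 q.2) : ℝ)) <| calc
      ∑ ω, p ω * ∑ q ∈ L ×ˢ L, (#(stranded (H ω) L q.1 q.2) : ℝ)
        = ∑ q ∈ L ×ˢ L, ∑ ω, p ω * (#(stranded (H ω) L q.1 q.2) : ℝ) := by
          simp only [mul_sum]; exact sum_comm
      _ ≤ ∑ q ∈ L ×ˢ L, ((g #L : ℝ) + 1) := sum_le_sum hpair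
      _ = #L ^ 2 * (g #L + 1) := by rw [sum_const, card_product, nsmul_eq_mul]; push_cast; ring
  refine ⟨H ω, ?_, by exact_mod_cast hω⟩
  simpa only [← SimpleGraph.coe_edgeFinset, Set.ncard_coe_finset] using hHm ω

theorem card_mul_le_of_isObliviousConnPreserver {L : Finset V} (hL : L.Nonempty) {g : ℕ → ℕ}
    (hg : Monotone g) {m : ℝ} (h : IsObliviousConnPreserver (completeBipartiteBetween L) g m) :
    (#L : ℝ) * (#Lᶜ - 4 * (g #L + 1)) ≤ 4 * m := by
  obtain ⟨H, hm, hstranded⟩ := exists_subgraph_sum_card_stranded_le hg h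
  have hcount : (#Lᶜ * #L ^ 2 : ℝ) ≤ 4 * #L * #H.edgeFinset +
      4 * ∑ q ∈ L ×ˢ L, (#(stranded H L q.1 q.2) : ℝ) := by
    exact_mod_cast card_compl_mul_sq_le H L
  have hL0 : (0 : ℝ) < #L := by exact_mod_cast hL.card_pos
  refine le_of_mul_le_mul_left ?_ hL0
  nlinarith

end Counting

/-- For every integer `k ≥ 2` there are `c > 0` and `n₀` such that for every
`n ≥ n₀` there is an `n`-vertex graph `G` for which every oblivious
`(x ↦ x^k)`-reliable connectivity preserver has at least `c·n^{1+1/k}` edges. -/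
theorem connectivity_preserver_lower_bound (k : ℕ) (hk : 2 ≤ k) :
    ∃ c : ℝ, 0 < c ∧ ∃ n₀ : ℕ, ∀ n : ℕ, n₀ ≤ n →
      ∃ G : SimpleGraph (Fin n), ∀ m : ℝ,
        IsObliviousConnPreserver G (fun x => x ^ k) m →
        c * (n : ℝ) ^ (1 + (k : ℝ)⁻¹) ≤ m := by
  refine ⟨1 / 128, by norm_num, 16 ^ k, fun n hn => ?_⟩
  have hk0 : k ≠ 0 := by omega
  set x := (n : ℝ) ^ (k : ℝ)⁻¹
  have hxk : x ^ k = n := Real.rpow_inv_natCast_pow n.cast_nonneg hk0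
  have hx16 : 16 ≤ x :=
    (pow_le_pow_iff_left₀ (by norm_num) (by positivity) hk0).mp (by rw [hxk]; exact_mod_cast hn)
  have hxn : x ≤ n := hxk ▸ le_self_pow₀ (by linarith) hk0
  set d := ⌊x / 8⌋₊
  have hd_le : (d : ℝ) ≤ x / 8 := Nat.floor_le (by positivity)
  have hd_ge : x / 16 ≤ d := by linarith [Nat.lt_floor_add_one (x / 8)]
  have hdk : (d : ℝ) ^ k ≤ n / 64 := calc
    (d : ℝ) ^ k ≤ (x / 8) ^ k := by gcongr
    _ = n / 8 ^ k := by rw [div_pow, hxk]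
    _ ≤ n / 8 ^ 2 := by gcongr; norm_num
    _ = n / 64 := by norm_num
  have hdn : d ≤ n := by exact_mod_cast (hd_le.trans (by linarith) : (d : ℝ) ≤ n)
  obtain ⟨L, -, hL⟩ := exists_subset_card_eq (s := (univ : Finset (Fin n))) (by simpa using hdn)
  refine ⟨completeBipartiteBetween L, fun m hm => ?_⟩
  have key := card_mul_le_of_isObliviousConnPreserver
    (card_pos.mp (hL ▸ Nat.floor_pos.mpr (by linarith))) (pow_left_mono k) hm
  rw [card_compl, Fintype.card_fin, hL, Nat.cast_sub hdn] at key
  push_cast at key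
  have hremaining : (n : ℝ) / 2 ≤ n - d - 4 * (d ^ k + 1) := by linarith
  rw [Real.rpow_add (by linarith), Real.rpow_one]
  nlinarith [mul_le_mul hd_ge hremaining (by positivity) (by positivity)]
end
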